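/- Every interpretation of regular expressions over Σ ∪ {⊤} into binary relations on a set X (with + as union, · as composition, * as reflexive-transitive closure, 0 as ∅, 1 as identity, ⊤ as X×X) satisfies: σ̂(e) = ⋃_{u ∈ ⟦e⟧} σ̂(u), where ⟦e⟧ is the language of words of e and σ̂(u) is the relational interpretation of the word u. -/

import Mathlib

open scoped Computability SetRel

/-- Relational composition of subsets of `X × X`. -/
def rcomp {X : Type*} (R S : Set (X × X)) : Set (X × X) :=
  {p | ∃ y : X, (p.1, y) ∈ R ∧ (y, p.2) ∈ S}

/-- The identity relation on `X`. -/
def ridRel {X : Type*} : Set (X × X) := {p | p.1 = p.2}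

/-- `n`-fold relational composition. -/
def rpow {X : Type*} (R : Set (X × X)) : ℕ → Set (X × X)
  | 0 => ridRel
  | n + 1 => rcomp R (rpow R n)

/-- Reflexive-transitive closure of a relation. -/
def rstar {X : Type*} (R : Set (X × X)) : Set (X × X) := ⋃ n : ℕ, rpow R n

/-- Relational interpretation of a word. -/
def relInterp {α X : Type*} (σ : α → Set (X × X)) : List α → Set (X × X)
  | [] => ridRel
  | a :: w => rcomp (σ a) (relInterp σ w)

/-- Relational interpretation of a regular expression: `+` as union, `·` as
composition, `*` as reflexive-transitive closure, `0` as `∅`, `1` as the identity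
relation, each letter via `σ` (so `⊤` as `X × X` when `σ ⊤ = X × X`). -/
def relEval {α X : Type*} (σ : α → Set (X × X)) : RegularExpression α → Set (X × X)
  | RegularExpression.zero => ∅
  | RegularExpression.epsilon => ridRel
  | RegularExpression.char a => σ a
  | RegularExpression.plus e f => relEval σ e ∪ relEval σ f
  | RegularExpression.comp e f => rcomp (relEval σ e) (relEval σ f)
  | RegularExpression.star e => rstar (relEval σ e)

/-!
The map `L ↦ ⋃ u ∈ L, relInterp σ u` from languages to relations sends `0`, `1`, `{[a]}`, `+` and
`*` to `∅`, the identity, `σ a`, union and composition, and it preserves arbitrary unions. Since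
`L∗ = ⨆ n, L ^ n`, it also sends the Kleene star to the reflexive-transitive closure, so it agrees
with `relEval σ` on the language of every regular expression.
-/

section

variable {α X : Type*} (σ : α → Set (X × X))

theorem rcomp_eq_comp (R S : Set (X × X)) : rcomp R S = R ○ S := rfl

theorem relInterp_singleton (a : α) : relInterp σ [a] = σ a :=
  SetRel.comp_id (σ a)

theorem relInterp_append (u v : List α) :
    relInterp σ (u ++ v) = rcomp (relInterp σ u) (relInterp σ v) := by
  induction u with
  | nil => exact (SetRel.id_comp _).symm
  | cons a u ih =>
    simp only [List.cons_append, relInterp, ih, rcomp_eq_comp, SetRel.comp_assoc]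

def langInterp (L : Language α) : Set (X × X) :=
  ⋃ u ∈ L, relInterp σ u

theorem langInterp_zero : langInterp σ 0 = ∅ := by
  simp [langInterp]

theorem langInterp_one : langInterp σ 1 = ridRel := by
  simp [langInterp, relInterp]

theorem langInterp_singleton (a : α) : langInterp σ {[a]} = σ a :=
  (Set.biUnion_singleton [a] _).trans (relInterp_singleton σ a)

theorem langInterp_add (L M : Language α) :
    langInterp σ (L + M) = langInterp σ L ∪ langInterp σ M :=
  Set.biUnion_union L M _

theorem langInterp_mul (L M : Language α) :
    langInterp σ (L * M) = rcomp (langInterp σ L) (langInterp σ M) := by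
  refine (Set.biUnion_image2 (L : Set (List α)) M (· ++ ·) (relInterp σ)).trans ?_
  simp only [relInterp_append, langInterp, rcomp_eq_comp, SetRel.iUnion_comp]
  simp only [SetRel.comp_iUnion]
  -- the sides differ only in the membership instance, `Language` versus `Set`
  rfl

theorem langInterp_iSup {ι : Sort*} (L : ι → Language α) :
    langInterp σ (⨆ i, L i) = ⋃ i, langInterp σ (L i) :=
  Set.biUnion_iUnion L _

theorem langInterp_pow (L : Language α) (n : ℕ) :
    langInterp σ (L ^ n) = rpow (langInterp σ L) n := by
  induction n with
  | zero => exact langInterp_one σ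
  | succ n ih => rw [pow_succ', langInterp_mul, ih, rpow]

theorem langInterp_kstar (L : Language α) : langInterp σ L∗ = rstar (langInterp σ L) := by
  simp only [Language.kstar_eq_iSup_pow, langInterp_iSup, langInterp_pow, rstar]

end

theorem relEval_eq_iUnion_general {α X : Type*} (σ : α → Set (X × X))
    (e : RegularExpression α) :
    relEval σ e = ⋃ u ∈ e.matches', relInterp σ u := by
  change relEval σ e = langInterp σ e.matches'
  induction e with
  | zero => exact (langInterp_zero σ).symm
  | epsilon => exact (langInterp_one σ).symm
  | char a => exact (langInterp_singleton σ a).symm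
  | plus e f ihe ihf => rw [relEval, ihe, ihf]; exact (langInterp_add σ _ _).symm
  | comp e f ihe ihf => rw [relEval, ihe, ihf]; exact (langInterp_mul σ _ _).symm
  | star e ih => rw [relEval, ih]; exact (langInterp_kstar σ _).symm

/-- The relational interpretation of a regular expression is the union of the
relational interpretations of the words in its language. -/
theorem relEval_eq_iUnion {α X : Type*} (top : α) (σ : α → Set (X × X))
    (hσ : σ top = Set.univ) (e : RegularExpression α) :
    relEval σ e = ⋃ u ∈ e.matches', relInterp σ u :=
  relEval_eq_iUnion_general σ e
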